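/- arXiv:2210.08147 — 5 statements merged into one kernel-verified Lean document; each statement's English description precedes it below -/
import Mathlib

section
/- Let n ≥ 2 and let C be the n×n equicorrelation matrix with common correlation r ∈ (−1/(n−1), 1). Then the matrix logarithm G = log C is an 'equi' matrix with common off-diagonal entry z = (1/n)·log(1 + n·r/(1−r)), and conversely r = (1 − e^{−nz})/(1 + (n−1)e^{−nz}). -/
open NormedSpace

theorem exp_smul_idem {m : ℕ} (A : Matrix (Fin m) (Fin m) ℝ) (h : A * A = A) (c : ℝ) :
    NormedSpace.exp (c • A) = 1 + (Real.exp c - 1) • A := by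
  letI : SeminormedRing (Matrix (Fin m) (Fin m) ℝ) := Matrix.linftyOpSemiNormedRing
  letI : NormedRing (Matrix (Fin m) (Fin m) ℝ) := Matrix.linftyOpNormedRing
  letI : NormedAlgebra ℝ (Matrix (Fin m) (Fin m) ℝ) := Matrix.linftyOpNormedAlgebra
  have hpow : ∀ k : ℕ, A ^ (k + 1) = A := by
    intro k
    induction k with
    | zero => simp
    | succ k ih => rw [pow_succ, ih, h]
  have hsum : Summable fun k : ℕ => c ^ (k + 1) / (Nat.factorial (k + 1) : ℝ) := by
    have := (Real.summable_pow_div_factorial c).comp_injective (add_left_injective 1)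
    simpa [Function.comp_def] using this
  have hexp : Real.exp c - 1 = ∑' k : ℕ, c ^ (k + 1) / (Nat.factorial (k + 1) : ℝ) := by
    have h1 : Real.exp c = ∑' k : ℕ, c ^ k / (Nat.factorial k : ℝ) := by
      rw [Real.exp_eq_exp_ℝ, NormedSpace.exp_eq_tsum_div]
    rw [h1, Summable.tsum_eq_zero_add (Real.summable_pow_div_factorial c)]
    simp
  rw [NormedSpace.exp_eq_tsum ℝ]
  beta_reduce
  erw [Summable.tsum_eq_zero_add (NormedSpace.expSeries_summable' (𝕂 := ℝ) (c • A))]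
  have hterm : ∀ k : ℕ, ((Nat.factorial (k + 1) : ℝ)⁻¹) • (c • A) ^ (k + 1)
      = (c ^ (k + 1) / (Nat.factorial (k + 1) : ℝ)) • A := by
    intro k
    rw [smul_pow, hpow, smul_smul]
    congr 1
    field_simp
  simp only [pow_zero, Nat.factorial_zero, Nat.cast_one, inv_one, one_smul, hterm]
  rw [Summable.tsum_smul_const hsum, ← hexp]

/-- For the n×n equicorrelation matrix `C` with common correlation
`r ∈ (−1/(n−1), 1)`, the matrix logarithm `G = log C` (i.e. the symmetric matrix
with `exp G = C`) is an equi matrix whose common off-diagonal entry is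
`z = (1/n)·log(1 + n·r/(1−r))`, and `r = (1 − e^{−nz})/(1 + (n−1)e^{−nz})`. -/
theorem equicorrelation_log (n : ℕ) (hn : 2 ≤ n) (r : ℝ)
    (hr : r ∈ Set.Ioo (-(1 / ((n : ℝ) - 1))) 1)
    (C : Matrix (Fin n) (Fin n) ℝ)
    (hC : ∀ i j, C i j = if i = j then 1 else r) :
    (∃ G : Matrix (Fin n) (Fin n) ℝ, G.IsSymm ∧ NormedSpace.exp G = C ∧
        (∃ y : ℝ, ∀ i j, G i j =
          if i = j then y else (1 / (n : ℝ)) * Real.log (1 + n * r / (1 - r)))) ∧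
      r = (1 - Real.exp (-(n : ℝ) * ((1 / (n : ℝ)) * Real.log (1 + n * r / (1 - r))))) /
          (1 + ((n : ℝ) - 1) *
            Real.exp (-(n : ℝ) * ((1 / (n : ℝ)) * Real.log (1 + n * r / (1 - r))))) := by
  obtain ⟨hrl, hru⟩ := hr
  have hn2 : (2 : ℝ) ≤ (n : ℝ) := by exact_mod_cast hn
  have hn0 : (n : ℝ) ≠ 0 := by linarith
  have hn1 : (0 : ℝ) < (n : ℝ) - 1 := by linarith
  have h1r : (0 : ℝ) < 1 - r := by linarith
  have hs : (0 : ℝ) < 1 + ((n : ℝ) - 1) * r := by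
    have h1 : (-1 : ℝ) / ((n : ℝ) - 1) < r := by
      rw [neg_div, one_div]; simpa using hrl
    have h2 := (div_lt_iff₀ hn1).mp h1
    nlinarith
  set t : ℝ := 1 + n * r / (1 - r) with ht
  have htval : t = (1 + ((n : ℝ) - 1) * r) / (1 - r) := by
    rw [ht]
    field_simp
    ring
  have htpos : 0 < t := by rw [htval]; positivity
  set z : ℝ := (1 / (n : ℝ)) * Real.log t with hz
  have hnz : (n : ℝ) * z = Real.log t := by
    rw [hz]; field_simp
  have henz : Real.exp ((n : ℝ) * z) = t := by rw [hnz, Real.exp_log htpos]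
  set a : ℝ := Real.log (1 - r) with ha
  have hea : Real.exp a = 1 - r := Real.exp_log h1r
  -- the projection matrix
  set P : Matrix (Fin n) (Fin n) ℝ := Matrix.of (fun _ _ => ((n : ℝ))⁻¹) with hP
  have hPidem : P * P = P := by
    ext i j
    simp [hP, Matrix.mul_apply, Finset.sum_const]
    field_simp
  set G : Matrix (Fin n) (Fin n) ℝ := a • (1 : Matrix (Fin n) (Fin n) ℝ) + ((n : ℝ) * z) • P
    with hG
  have hGentry : ∀ i j, G i j = if i = j then a + z else z := by
    intro i j
    simp only [hG, Matrix.add_apply, Matrix.smul_apply, Matrix.one_apply, hP, Matrix.of_apply,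
      smul_eq_mul]
    rcases eq_or_ne i j with h | h <;> simp [h] <;> field_simp
  have hexpG : NormedSpace.exp G = C := by
    rw [hG, Matrix.exp_add_of_commute _ _ ((Commute.one_left _).smul_left a)]
    have e1 : NormedSpace.exp (a • (1 : Matrix (Fin n) (Fin n) ℝ))
        = 1 + (Real.exp a - 1) • (1 : Matrix (Fin n) (Fin n) ℝ) :=
      exp_smul_idem 1 (one_mul 1) a
    rw [e1, exp_smul_idem P hPidem ((n : ℝ) * z), hea, henz]
    ext i j
    simp only [Matrix.add_mul, Matrix.mul_add, Matrix.one_mul, Matrix.mul_one,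
      Matrix.smul_mul, Matrix.mul_smul, smul_smul, Matrix.add_apply, Matrix.smul_apply,
      Matrix.one_apply, hP, Matrix.of_apply, smul_eq_mul, hC]
    rcases eq_or_ne i j with h | h
    · simp only [h, if_true]
      have : (t - 1) = (n : ℝ) * r / (1 - r) := by rw [ht]; ring
      rw [this]
      field_simp
      ring
    · simp only [h, if_false]
      have : (t - 1) = (n : ℝ) * r / (1 - r) := by rw [ht]; ring
      rw [this]
      field_simp
      ring
  constructor
  · refine ⟨G, ?_, hexpG, ⟨a + z, ?_⟩⟩
    · rw [Matrix.IsSymm]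
      ext i j
      rw [Matrix.transpose_apply, hGentry, hGentry]
      simp [eq_comm]
    · intro i j
      rw [hGentry i j, hz]
  · have hexpneg : Real.exp (-(n : ℝ) * ((1 / (n : ℝ)) * Real.log t))
        = (1 - r) / (1 + ((n : ℝ) - 1) * r) := by
      have : -(n : ℝ) * ((1 / (n : ℝ)) * Real.log t) = -Real.log t := by
        field_simp
      rw [this, Real.exp_neg, Real.exp_log htpos, htval]
      rw [inv_div]
    rw [hexpneg]
    have hs' : (1 + ((n : ℝ) - 1) * r) ≠ 0 := ne_of_gt hs
    have hden : (0:ℝ) < 1 + ((n : ℝ) - 1) * ((1 - r) / (1 + ((n : ℝ) - 1) * r)) := by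
      have hq : (0:ℝ) < (1 - r) / (1 + ((n : ℝ) - 1) * r) := div_pos h1r hs
      nlinarith
    rw [eq_div_iff (ne_of_gt hden)]
    have key : (1 - r) / (1 + ((n : ℝ) - 1) * r) * (1 + ((n : ℝ) - 1) * r) = 1 - r :=
      div_mul_cancel₀ _ hs'
    linear_combination key
end

section
/- Let G be a real symmetric n×n matrix with nonnegative off-diagonal entries, and suppose G is irreducible (there is no permutation matrix P such that PGP′ is block diagonal with two nonempty diagonal blocks and zero off-diagonal blocks). Then every entry of exp(G) is strictly positive. -/
open NormedSpace Nat

/-- A matrix is reducible if after simultaneous permutation of rows and columns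
it becomes block diagonal with two nonempty diagonal blocks; equivalently there
is a nontrivial subset `S` of indices with all entries between `S` and its
complement equal to zero. -/
def MatrixReducible {n : ℕ} (A : Matrix (Fin n) (Fin n) ℝ) : Prop :=
  ∃ S : Set (Fin n), S.Nonempty ∧ Sᶜ.Nonempty ∧
    (∀ i ∈ S, ∀ j ∈ Sᶜ, A i j = 0) ∧ (∀ i ∈ S, ∀ j ∈ Sᶜ, A j i = 0)

lemma pow_entry_nonneg {n : ℕ} {A : Matrix (Fin n) (Fin n) ℝ}
    (hA : ∀ i j, 0 ≤ A i j) : ∀ k i j, 0 ≤ (A ^ k) i j := by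
  intro k
  induction k with
  | zero => intro i j; simp [Matrix.one_apply]; positivity
  | succ k ih =>
    intro i j
    rw [pow_succ, Matrix.mul_apply]
    exact Finset.sum_nonneg fun u _ => mul_nonneg (ih i u) (hA u j)

/-- If `G` is real symmetric with nonnegative off-diagonal entries
and irreducible, then every entry of `exp(G)` is strictly positive. -/
theorem exp_metzler_irreducible_pos (n : ℕ) (G : Matrix (Fin n) (Fin n) ℝ)
    (hsymm : G.IsSymm) (hoff : ∀ i j, i ≠ j → 0 ≤ G i j)
    (hirr : ¬ MatrixReducible G) :
    ∀ i j, 0 < NormedSpace.exp G i j := by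
  set c : ℝ := 1 + ∑ m, |G m m| with hc
  set A : Matrix (Fin n) (Fin n) ℝ := G + c • (1 : Matrix (Fin n) (Fin n) ℝ) with hA
  have habs : ∀ i : Fin n, |G i i| ≤ ∑ m, |G m m| :=
    fun i => Finset.single_le_sum (fun m _ => abs_nonneg (G m m)) (Finset.mem_univ i)
  have hAdiag : ∀ i, 0 < A i i := by
    intro i
    have h1 := habs i
    have h2 := neg_abs_le (G i i)
    simp only [hA, Matrix.add_apply, Matrix.smul_apply, Matrix.one_apply_eq, smul_eq_mul,
      mul_one, hc]
    linarith
  have hAoff : ∀ i j, i ≠ j → A i j = G i j := by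
    intro i j hij
    simp [hA, Matrix.one_apply_ne hij]
  have hAnn : ∀ i j, 0 ≤ A i j := by
    intro i j
    rcases eq_or_ne i j with rfl | hij
    · exact (hAdiag i).le
    · rw [hAoff i j hij]; exact hoff i j hij
  have hpow := pow_entry_nonneg hAnn
  -- connectivity: from any i we can reach any j
  have hreach : ∀ i j, ∃ k, 0 < (A ^ k) i j := by
    intro i j
    by_contra hcon
    push_neg at hcon
    apply hirr
    refine ⟨{t | ∃ k, 0 < (A ^ k) i t}, ⟨i, 0, by simp [Matrix.one_apply]⟩,
      ⟨j, fun ⟨k, hk⟩ => absurd hk (not_lt_of_ge (hcon k))⟩, ?_, ?_⟩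
    · intro s hs t ht
      by_contra hne
      have hst : s ≠ t := by rintro rfl; exact ht hs
      have hApos : 0 < A s t := by
        rw [hAoff s t hst]
        exact lt_of_le_of_ne (hoff s t hst) (Ne.symm hne)
      obtain ⟨k, hk⟩ := hs
      refine ht ⟨k + 1, ?_⟩
      rw [pow_succ, Matrix.mul_apply]
      exact lt_of_lt_of_le (mul_pos hk hApos)
        (Finset.single_le_sum (f := fun u => (A ^ k) i u * A u t)
          (fun u _ => mul_nonneg (hpow k i u) (hAnn u t)) (Finset.mem_univ s))
    · intro s hs t ht
      have hst : s ≠ t := by rintro rfl; exact ht hs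
      have h1 : G t s = G s t := (congrFun (congrFun hsymm t) s).symm
      by_contra hne
      rw [h1] at hne
      -- same argument as above
      have hApos : 0 < A s t := by
        rw [hAoff s t hst]
        exact lt_of_le_of_ne (hoff s t hst) (Ne.symm hne)
      obtain ⟨k, hk⟩ := hs
      refine ht ⟨k + 1, ?_⟩
      rw [pow_succ, Matrix.mul_apply]
      exact lt_of_lt_of_le (mul_pos hk hApos)
        (Finset.single_le_sum (f := fun u => (A ^ k) i u * A u t)
          (fun u _ => mul_nonneg (hpow k i u) (hAnn u t)) (Finset.mem_univ s))
  -- summability and entrywise formula for exp A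
  have hsum : Summable (fun k : ℕ => (k !⁻¹ : ℝ) • A ^ k) := by
    letI : SeminormedRing (Matrix (Fin n) (Fin n) ℝ) := Matrix.linftyOpSemiNormedRing
    letI : NormedRing (Matrix (Fin n) (Fin n) ℝ) := Matrix.linftyOpNormedRing
    letI : NormedAlgebra ℝ (Matrix (Fin n) (Fin n) ℝ) := Matrix.linftyOpNormedAlgebra
    exact expSeries_summable' (𝕂 := ℝ) A
  have hexpA : exp A = ∑' k : ℕ, (k !⁻¹ : ℝ) • A ^ k := by
    letI : SeminormedRing (Matrix (Fin n) (Fin n) ℝ) := Matrix.linftyOpSemiNormedRing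
    letI : NormedRing (Matrix (Fin n) (Fin n) ℝ) := Matrix.linftyOpNormedRing
    letI : NormedAlgebra ℝ (Matrix (Fin n) (Fin n) ℝ) := Matrix.linftyOpNormedAlgebra
    exact congrFun (exp_eq_tsum (𝕂 := ℝ)) A
  have hsum1 : ∀ i, Summable (fun k : ℕ => ((k !⁻¹ : ℝ) • A ^ k) i) := by
    intro i
    exact (Summable.map hsum (Pi.evalAddMonoidHom (fun _ : Fin n => Fin n → ℝ) i)
      (continuous_apply i))
  have hsum2 : ∀ i j, Summable (fun k : ℕ => ((k !⁻¹ : ℝ) • A ^ k) i j) := by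
    intro i j
    exact (Summable.map (hsum1 i) (Pi.evalAddMonoidHom (fun _ : Fin n => ℝ) j)
      (continuous_apply j))
  have hentry : ∀ i j, exp A i j = ∑' k : ℕ, (k !⁻¹ : ℝ) * (A ^ k) i j := by
    intro i j
    rw [hexpA]
    erw [tsum_apply hsum, tsum_apply (hsum1 i)]
    simp [Matrix.smul_apply]
  have hexpApos : ∀ i j, 0 < exp A i j := by
    intro i j
    rw [hentry i j]
    obtain ⟨k0, hk0⟩ := hreach i j
    refine Summable.tsum_pos ?_ (fun k => mul_nonneg (by positivity) (hpow k i j)) k0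
      (mul_pos (by positivity) hk0)
    · have := hsum2 i j
      simpa [Matrix.smul_apply, smul_eq_mul] using this
  -- relate exp G to exp A
  have hGeq : G = (-c) • (1 : Matrix (Fin n) (Fin n) ℝ) + A := by
    rw [hA, neg_smul]; abel
  have hcomm : Commute ((-c) • (1 : Matrix (Fin n) (Fin n) ℝ)) A :=
    (Commute.one_left A).smul_left (-c)
  have hsplit : exp G = exp ((-c) • (1 : Matrix (Fin n) (Fin n) ℝ)) * exp A := by
    rw [hGeq]; exact Matrix.exp_add_of_commute _ _ hcomm
  have hdiag : ((-c) • (1 : Matrix (Fin n) (Fin n) ℝ)) =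
      Matrix.diagonal (fun _ => (-c : ℝ)) := by
    ext a b
    rcases eq_or_ne a b with rfl | hab
    · simp [Matrix.one_apply]
    · simp [Matrix.one_apply_ne hab, Matrix.diagonal_apply_ne _ hab]
  have hexpdiag : exp ((-c) • (1 : Matrix (Fin n) (Fin n) ℝ)) =
      Matrix.diagonal (fun _ => Real.exp (-c)) := by
    rw [hdiag, Matrix.exp_diagonal, Pi.exp_def]
    simp only [← Real.exp_eq_exp_ℝ]
  intro i j
  rw [hsplit, hexpdiag, Matrix.diagonal_mul]
  exact mul_pos (Real.exp_pos (-c)) (hexpApos i j)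
end

section
/- Let C be an n×n correlation matrix with smallest eigenvalue λ_min and let G = log C. Then for every i ≠ j, log λ_min ≤ −|G_{ij}|; equivalently λ_min ≤ e^{−max_{i≠j}|G_{ij}|}. -/
open Matrix

/-- Let `C` be a correlation matrix with smallest eigenvalue
`λmin` and `G = log C`. Then for every `i ≠ j`, `log λmin ≤ −|G i j|`. -/
theorem log_min_eigenvalue_le (n : ℕ) (C G : Matrix (Fin n) (Fin n) ℝ)
    (hC : C.PosDef) (hdiag : ∀ i, C i i = 1)
    (hGsymm : G.IsSymm) (hexp : NormedSpace.exp G = C)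
    (lamMin : ℝ)
    (hleast : IsLeast {x : ℝ | ∃ k, hC.1.eigenvalues k = x} lamMin) :
    ∀ i j, i ≠ j → Real.log lamMin ≤ -|G i j| := by
  classical
  have hG : G.IsHermitian := by
    rw [Matrix.IsHermitian, Matrix.conjTranspose_eq_transpose_of_trivial]; exact hGsymm
  set U : Matrix (Fin n) (Fin n) ℝ :=
    (Matrix.IsHermitian.eigenvectorUnitary hG : Matrix (Fin n) (Fin n) ℝ) with hU
  set μ := hG.eigenvalues with hμ
  have hUU : U * star U = 1 :=
    (Matrix.mem_unitaryGroup_iff).mp (Matrix.IsHermitian.eigenvectorUnitary hG).2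
  have hUU' : star U * U = 1 :=
    (Matrix.mem_unitaryGroup_iff').mp (Matrix.IsHermitian.eigenvectorUnitary hG).2
  have hUunit : IsUnit U := ⟨⟨U, star U, hUU, hUU'⟩, rfl⟩
  have hUinv : U⁻¹ = star U := Matrix.inv_eq_left_inv hUU'
  have hGspec : G = U * Matrix.diagonal μ * star U := by
    have h := hG.spectral_theorem
    rwa [show (RCLike.ofReal ∘ μ : Fin n → ℝ) = μ by
      rw [RCLike.ofReal_real_eq_id]; rfl] at h
  have hCdecomp : C = U * Matrix.diagonal (fun k => Real.exp (μ k)) * star U := by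
    rw [← hexp, hGspec, ← hUinv, Matrix.exp_conj U _ hUunit, Matrix.exp_diagonal]
    rw [hUinv, show (NormedSpace.exp μ : Fin n → ℝ) = fun k => Real.exp (μ k) by
      funext k; rw [Pi.coe_exp, ← Real.exp_eq_exp_ℝ]]
  -- spectrum of C
  have hspecC : spectrum ℝ C = Set.range (fun k => Real.exp (μ k)) := by
    rw [hCdecomp]
    rw [show U = ((Matrix.IsHermitian.eigenvectorUnitary hG :
        unitary (Matrix (Fin n) (Fin n) ℝ)) : Matrix (Fin n) (Fin n) ℝ) from rfl]
    rw [Unitary.spectrum_star_right_conjugate, spectrum_diagonal]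
  have hspecC' : spectrum ℝ C = Set.range hC.1.eigenvalues :=
    Matrix.IsHermitian.spectrum_real_eq_range_eigenvalues hC.1
  have hlam_pos : 0 < lamMin := by
    obtain ⟨k0, hk0⟩ := hleast.1
    exact hk0 ▸ hC.eigenvalues_pos k0
  have hlog : ∀ k, Real.log lamMin ≤ μ k := by
    intro k
    have hmem : Real.exp (μ k) ∈ Set.range hC.1.eigenvalues := by
      rw [← hspecC', hspecC]; exact ⟨k, rfl⟩
    obtain ⟨k', hk'⟩ := hmem
    have hle : lamMin ≤ Real.exp (μ k) := hleast.2 ⟨k', hk'⟩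
    exact (Real.log_le_iff_le_exp hlam_pos).mpr hle
  set c := Real.log lamMin with hc
  -- M1 = G - c • 1 is PosSemidef
  have hM1 : G - c • (1 : Matrix (Fin n) (Fin n) ℝ)
      = U * Matrix.diagonal (fun k => μ k - c) * star U := by
    have hds : Matrix.diagonal (fun k => μ k - c)
        = Matrix.diagonal μ - c • (1 : Matrix (Fin n) (Fin n) ℝ) := by
      ext i j
      rcases eq_or_ne i j with rfl | h
      · simp
      · simp [Matrix.diagonal_apply_ne _ h, Matrix.one_apply_ne h]
    rw [hds, Matrix.mul_sub, Matrix.sub_mul, ← hGspec, Matrix.mul_smul, Matrix.mul_one,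
      Matrix.smul_mul, hUU]
  have hM1pos : (G - c • (1 : Matrix (Fin n) (Fin n) ℝ)).PosSemidef := by
    rw [hM1, show star U = Uᴴ from rfl]
    have hnn : (0 : Fin n → ℝ) ≤ fun k => μ k - c := by
      intro k
      simp only [Pi.zero_apply]
      have := hlog k
      linarith
    exact (Matrix.PosSemidef.diagonal hnn).mul_mul_conjTranspose_same U
  -- M2 = C - 1 - G is PosSemidef
  have hM2 : C - 1 - G
      = U * Matrix.diagonal (fun k => Real.exp (μ k) - 1 - μ k) * star U := by
    have hds : Matrix.diagonal (fun k => Real.exp (μ k) - 1 - μ k)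
        = Matrix.diagonal (fun k => Real.exp (μ k)) - 1 - Matrix.diagonal μ := by
      ext i j
      rcases eq_or_ne i j with rfl | h
      · simp
      · simp [Matrix.diagonal_apply_ne _ h, Matrix.one_apply_ne h]
    rw [hds, Matrix.mul_sub, Matrix.mul_sub, Matrix.sub_mul, Matrix.sub_mul,
      ← hGspec, ← hCdecomp, Matrix.mul_one, hUU]
  have hM2pos : (C - 1 - G).PosSemidef := by
    rw [hM2, show star U = Uᴴ from rfl]
    have hnn : (0 : Fin n → ℝ) ≤ fun k => Real.exp (μ k) - 1 - μ k := by
      intro k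
      simp only [Pi.zero_apply]
      have := Real.add_one_le_exp (μ k)
      linarith
    exact (Matrix.PosSemidef.diagonal hnn).mul_mul_conjTranspose_same U
  -- quadratic form computation
  have quad : ∀ (M : Matrix (Fin n) (Fin n) ℝ) (i j : Fin n) (s : ℝ),
      (((Pi.single i 1 : Fin n → ℝ) + s • (Pi.single j 1 : Fin n → ℝ))) ⬝ᵥ (M *ᵥ (((Pi.single i 1 : Fin n → ℝ) + s • (Pi.single j 1 : Fin n → ℝ))))
        = M i i + s * M i j + s * M j i + s * s * M j j := by
    intro M i j s
    simp only [Matrix.mulVec_add, Matrix.mulVec_smul, dotProduct_add,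
      add_dotProduct, smul_dotProduct, dotProduct_smul,
      Matrix.mulVec_single_one, Matrix.col_apply, mul_one, single_dotProduct, one_mul, smul_eq_mul,
      Pi.smul_apply]
    ring
  intro i j hij
  have hsym : G j i = G i j := hGsymm.apply i j
  have hGii : G i i ≤ 0 := by
    have h := hM2pos.dotProduct_mulVec_nonneg (((Pi.single i 1 : Fin n → ℝ) + (0:ℝ) • (Pi.single i 1 : Fin n → ℝ)))
    rw [star_trivial, quad] at h
    simp only [Matrix.sub_apply, Matrix.one_apply_eq] at h
    rw [hdiag] at h
    linarith
  have hGjj : G j j ≤ 0 := by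
    have h := hM2pos.dotProduct_mulVec_nonneg (((Pi.single j 1 : Fin n → ℝ) + (0:ℝ) • (Pi.single j 1 : Fin n → ℝ)))
    rw [star_trivial, quad] at h
    simp only [Matrix.sub_apply, Matrix.one_apply_eq] at h
    rw [hdiag] at h
    linarith
  have key : ∀ s : ℝ, 0 ≤ (G i i - c) + s * G i j + s * G j i + s * s * (G j j - c) := by
    intro s
    have h := hM1pos.dotProduct_mulVec_nonneg (((Pi.single i 1 : Fin n → ℝ) + s • (Pi.single j 1 : Fin n → ℝ)))
    rw [star_trivial, quad] at h
    simp only [Matrix.sub_apply, Matrix.smul_apply, Matrix.one_apply_eq,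
      Matrix.one_apply_ne hij, Matrix.one_apply_ne hij.symm, smul_eq_mul, mul_zero,
      mul_one, sub_zero] at h
    convert h using 1
  have h1 := key 1
  have h2 := key (-1)
  rcases abs_cases (G i j) with ⟨habs, _⟩ | ⟨habs, _⟩ <;> rw [habs] <;> nlinarith
end

section
/- Let Z be a real random variable with density f_z(z) = (1/B(α,β)) · e^{−β(z−μ)/s} / (s (1 + e^{−(z−μ)/s})^{α+β}) where μ = log(n−1)/n and s = 1/n (the Type IV generalized logistic distribution). Then the random variable R = (1 − e^{−nZ})/(1 + (n−1)e^{−nZ}) has a Beta(α, β) distribution rescaled to the interval (−1/(n−1), 1), i.e., R has density f_r(r) = (1/B(α,β)) · ((1/(n−1) + r)^{α−1} (1−r)^{β−1}) / ((n/(n−1))^{α+β−1}) on (−1/(n−1), 1). -/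
open MeasureTheory
open Set

/-- The Beta function `B(α,β) = Γ(α)Γ(β)/Γ(α+β)`. -/
noncomputable def betaFn (α β : ℝ) : ℝ :=
  Real.Gamma α * Real.Gamma β / Real.Gamma (α + β)

/-- The Type IV generalized logistic density with parameters `α, β`, location
`μ = log(n−1)/n` and scale `s = 1/n`. -/
noncomputable def typeIVDensity (n : ℕ) (α β : ℝ) (z : ℝ) : ℝ :=
  (1 / betaFn α β) *
      Real.exp (-β * (z - Real.log ((n : ℝ) - 1) / n) / (1 / (n : ℝ))) /
    ((1 / (n : ℝ)) *
      (1 + Real.exp (-(z - Real.log ((n : ℝ) - 1) / n) / (1 / (n : ℝ)))) ^ (α + β))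

/-- The Beta(α,β) density rescaled to the interval `(−1/(n−1), 1)`. -/
noncomputable def rescaledBetaDensity (n : ℕ) (α β : ℝ) (x : ℝ) : ℝ :=
  if x ∈ Set.Ioo (-(1 / ((n : ℝ) - 1))) 1 then
    (1 / betaFn α β) *
        ((1 / ((n : ℝ) - 1) + x) ^ (α - 1) * (1 - x) ^ (β - 1)) /
      (((n : ℝ) / ((n : ℝ) - 1)) ^ (α + β - 1))
  else 0

lemma rpow_calc {c nn u v α β : ℝ} (hc : 0 < c) (hn : 0 < nn) (hu : 0 < u) (hv : 0 < v) :
    (c * v / u) ^ β / ((1 / nn) * (nn / u) ^ (α + β)) * (1 / (u * v))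
      = (u / c) ^ (α - 1) * v ^ (β - 1) / ((nn / c) ^ (α + β - 1)) := by
  have e1 : (c*v/u)^β = c^β * v^β / u^β := by
    rw [Real.div_rpow (by positivity) hu.le, Real.mul_rpow hc.le hv.le]
  have e2 : (nn/u)^(α+β) = nn^α*nn^β/(u^α*u^β) := by
    rw [Real.div_rpow hn.le hu.le, Real.rpow_add hn, Real.rpow_add hu]
  have e3 : (u/c)^(α-1) = (u^α/u)/(c^α/c) := by
    rw [Real.div_rpow hu.le hc.le, Real.rpow_sub hu, Real.rpow_sub hc, Real.rpow_one,
      Real.rpow_one]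
  have e4 : v^(β-1) = v^β/v := by rw [Real.rpow_sub hv, Real.rpow_one]
  have e5 : (nn/c)^(α+β-1) = (nn^α*nn^β/nn)/(c^α*c^β/c) := by
    rw [Real.div_rpow hn.le hc.le, Real.rpow_sub hn, Real.rpow_sub hc, Real.rpow_add hn,
      Real.rpow_add hc, Real.rpow_one, Real.rpow_one]
  rw [e1, e2, e3, e4, e5]
  have p1 : (0:ℝ) < c^β := Real.rpow_pos_of_pos hc _
  have p2 : (0:ℝ) < v^β := Real.rpow_pos_of_pos hv _
  have p3 : (0:ℝ) < u^β := Real.rpow_pos_of_pos hu _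
  have p4 : (0:ℝ) < u^α := Real.rpow_pos_of_pos hu _
  have p5 : (0:ℝ) < nn^α := Real.rpow_pos_of_pos hn _
  have p6 : (0:ℝ) < nn^β := Real.rpow_pos_of_pos hn _
  have p7 : (0:ℝ) < c^α := Real.rpow_pos_of_pos hc _
  field_simp

section maps

/-- The forward map `R = g(Z)`. -/
noncomputable def gmap (n : ℕ) (z : ℝ) : ℝ :=
  (1 - Real.exp (-(n : ℝ) * z)) / (1 + ((n : ℝ) - 1) * Real.exp (-(n : ℝ) * z))

/-- The inverse map. -/
noncomputable def hmap (n : ℕ) (x : ℝ) : ℝ :=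
  -Real.log ((1 - x) / (1 + ((n : ℝ) - 1) * x)) / n

variable {n : ℕ} (hn : 2 ≤ n)
include hn

lemma hc_pos : (0:ℝ) < (n : ℝ) - 1 := by
  have : (2:ℝ) ≤ (n:ℝ) := by exact_mod_cast hn
  linarith

lemma hn_pos : (0:ℝ) < (n : ℝ) := by
  have : (2:ℝ) ≤ (n:ℝ) := by exact_mod_cast hn
  linarith

lemma mem_Ioo_gmap (z : ℝ) : gmap n z ∈ Ioo (-(1 / ((n : ℝ) - 1))) 1 := by
  have hc := hc_pos hn
  set c := (n:ℝ) - 1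
  have ht : 0 < Real.exp (-(n:ℝ) * z) := Real.exp_pos _
  set t := Real.exp (-(n:ℝ) * z)
  have hD : 0 < 1 + c * t := by positivity
  have hcc : (1/c) * c = 1 := one_div_mul_cancel hc.ne'
  constructor
  · rw [gmap, lt_div_iff₀ hD]
    nlinarith [one_div_pos.mpr hc]
  · rw [gmap, div_lt_one hD]
    nlinarith

lemma denom_pos {x : ℝ} (hx : x ∈ Ioo (-(1 / ((n : ℝ) - 1))) 1) :
    0 < 1 + ((n:ℝ) - 1) * x ∧ 0 < 1 - x := by
  have hc := hc_pos hn
  have h1 := hx.1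
  have h2 := hx.2
  constructor
  · have hcc : ((n:ℝ)-1) * (1/((n:ℝ)-1)) = 1 := mul_one_div_cancel hc.ne'
    nlinarith [mul_lt_mul_of_pos_left h1 hc]
  · linarith

lemma exp_hmap {x : ℝ} (hx : x ∈ Ioo (-(1 / ((n : ℝ) - 1))) 1) :
    Real.exp (-(n:ℝ) * hmap n x) = (1 - x) / (1 + ((n:ℝ) - 1) * x) := by
  obtain ⟨hu, hv⟩ := denom_pos hn hx
  have hq : 0 < (1 - x) / (1 + ((n:ℝ) - 1) * x) := div_pos hv hu
  have hn0 := hn_pos hn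
  rw [hmap, show -(n:ℝ) * (-Real.log ((1 - x) / (1 + ((n:ℝ) - 1) * x)) / n)
      = Real.log ((1 - x) / (1 + ((n:ℝ) - 1) * x)) by field_simp]
  exact Real.exp_log hq

lemma gmap_hmap {x : ℝ} (hx : x ∈ Ioo (-(1 / ((n : ℝ) - 1))) 1) : gmap n (hmap n x) = x := by
  obtain ⟨hu, hv⟩ := denom_pos hn hx
  have hn0 := hn_pos hn
  rw [gmap, exp_hmap hn hx]
  have hnum : 1 - (1 - x) / (1 + ((n:ℝ) - 1) * x) = (n:ℝ) * x / (1 + ((n:ℝ) - 1) * x) := by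
    rw [one_sub_div hu.ne']; congr 1; ring
  have hden : 1 + ((n:ℝ) - 1) * ((1 - x) / (1 + ((n:ℝ) - 1) * x))
      = (n:ℝ) / (1 + ((n:ℝ) - 1) * x) := by
    field_simp; ring
  rw [hnum, hden]
  field_simp
  exact mul_div_cancel_right₀ x (ne_of_gt (by linarith))

lemma hmap_gmap (z : ℝ) : hmap n (gmap n z) = z := by
  have hc := hc_pos hn
  have hn0 := hn_pos hn
  have ht : 0 < Real.exp (-(n:ℝ) * z) := Real.exp_pos _
  set t := Real.exp (-(n:ℝ) * z) with htdef
  have hD : 0 < 1 + ((n:ℝ)-1) * t := by positivity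
  have key : (1 - gmap n z) / (1 + ((n:ℝ) - 1) * gmap n z) = t := by
    rw [gmap]
    have hnum : 1 - (1 - t) / (1 + ((n:ℝ)-1) * t) = (n:ℝ) * t / (1 + ((n:ℝ)-1) * t) := by
      field_simp; ring
    have hden : 1 + ((n:ℝ) - 1) * ((1 - t) / (1 + ((n:ℝ)-1) * t))
        = (n:ℝ) / (1 + ((n:ℝ)-1) * t) := by
      field_simp; ring
    rw [hnum, hden]
    field_simp
  rw [hmap, key, htdef, Real.log_exp]
  field_simp

lemma hmap_hasDerivAt {x : ℝ} (hx : x ∈ Ioo (-(1 / ((n : ℝ) - 1))) 1) :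
    HasDerivAt (hmap n) (1 / ((1 + ((n:ℝ) - 1) * x) * (1 - x))) x := by
  obtain ⟨hu, hv⟩ := denom_pos hn hx
  have hn0 := hn_pos hn
  have h1 : HasDerivAt (fun y : ℝ => 1 - y) (-1) x := by
    simpa using (hasDerivAt_id x).const_sub 1
  have h2 : HasDerivAt (fun y : ℝ => 1 + ((n:ℝ) - 1) * y) ((n:ℝ) - 1) x := by
    simpa using ((hasDerivAt_id x).const_mul ((n:ℝ) - 1)).const_add 1
  have hq : HasDerivAt (fun y : ℝ => (1 - y) / (1 + ((n:ℝ) - 1) * y))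
      ((-1 * (1 + ((n:ℝ) - 1) * x) - (1 - x) * ((n:ℝ) - 1)) / (1 + ((n:ℝ) - 1) * x) ^ 2) x :=
    h1.div h2 hu.ne'
  have hqx : (1 - x) / (1 + ((n:ℝ) - 1) * x) ≠ 0 := (div_pos hv hu).ne'
  have hlog : HasDerivAt (hmap n) (-(((-1 * (1 + ((n:ℝ) - 1) * x) - (1 - x) * ((n:ℝ) - 1)) /
      (1 + ((n:ℝ) - 1) * x) ^ 2) / ((1 - x) / (1 + ((n:ℝ) - 1) * x))) / n) x :=
    (hq.log hqx).neg.div_const (n:ℝ)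
  convert hlog using 1
  field_simp
  ring

lemma gmap_preimage (s : Set ℝ) :
    gmap n ⁻¹' s = hmap n '' (s ∩ Ioo (-(1 / ((n : ℝ) - 1))) 1) := by
  ext z
  simp only [Set.mem_preimage, Set.mem_image, Set.mem_inter_iff]
  constructor
  · intro hz
    exact ⟨gmap n z, ⟨hz, mem_Ioo_gmap hn z⟩, hmap_gmap hn z⟩
  · rintro ⟨x, ⟨hxs, hxI⟩, rfl⟩
    rwa [gmap_hmap hn hxI]

end maps

lemma density_transform {n : ℕ} (hn : 2 ≤ n) {α β : ℝ} {x : ℝ}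
    (hx : x ∈ Ioo (-(1 / ((n : ℝ) - 1))) 1) :
    ENNReal.ofReal |1 / ((1 + ((n:ℝ) - 1) * x) * (1 - x))| *
      ENNReal.ofReal (typeIVDensity n α β (hmap n x))
    = ENNReal.ofReal (rescaledBetaDensity n α β x) := by
  obtain ⟨hu, hv⟩ := denom_pos hn hx
  have hc := hc_pos hn
  have hn0 := hn_pos hn
  rw [← ENNReal.ofReal_mul (abs_nonneg _)]
  congr 1
  rw [rescaledBetaDensity, if_pos hx, typeIVDensity]
  have e0 : -(hmap n x - Real.log ((n:ℝ) - 1) / n) / (1 / (n:ℝ))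
      = -(n:ℝ) * hmap n x + Real.log ((n:ℝ) - 1) := by field_simp; ring
  have hE : Real.exp (-(hmap n x - Real.log ((n:ℝ) - 1) / n) / (1 / (n:ℝ)))
      = ((n:ℝ) - 1) * (1 - x) / (1 + ((n:ℝ) - 1) * x) := by
    rw [e0, Real.exp_add, exp_hmap hn hx, Real.exp_log hc]
    ring
  have e1 : -β * (hmap n x - Real.log ((n:ℝ) - 1) / n) / (1 / (n:ℝ))
      = (-(hmap n x - Real.log ((n:ℝ) - 1) / n) / (1 / (n:ℝ))) * β := by ring
  have hEb : Real.exp (-β * (hmap n x - Real.log ((n:ℝ) - 1) / n) / (1 / (n:ℝ)))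
      = (((n:ℝ) - 1) * (1 - x) / (1 + ((n:ℝ) - 1) * x)) ^ β := by
    rw [e1, Real.exp_mul, hE]
  rw [hEb, hE]
  have h1E : 1 + ((n:ℝ) - 1) * (1 - x) / (1 + ((n:ℝ) - 1) * x)
      = (n:ℝ) / (1 + ((n:ℝ) - 1) * x) := by field_simp; ring
  rw [h1E]
  have hx' : 1 / ((n:ℝ) - 1) + x = (1 + ((n:ℝ) - 1) * x) / ((n:ℝ) - 1) := by
    field_simp
  rw [hx', abs_of_pos (by positivity)]
  have key := rpow_calc (c := (n:ℝ) - 1) (nn := (n:ℝ)) (u := 1 + ((n:ℝ) - 1) * x)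
    (v := 1 - x) (α := α) (β := β) hc hn0 hu hv
  linear_combination (1 / betaFn α β) * key

/-- If `Z` has the Type IV generalized logistic density, then
`R = (1 − e^{−nZ})/(1 + (n−1)e^{−nZ})` has the Beta(α,β) density rescaled to
`(−1/(n−1), 1)`. -/
theorem typeIV_to_rescaled_beta (n : ℕ) (hn : 2 ≤ n) (α β : ℝ)
    (hα : 0 < α) (hβ : 0 < β)
    {Ω : Type*} [MeasurableSpace Ω] (P : Measure Ω) [IsProbabilityMeasure P]
    (Z : Ω → ℝ) (hZ : Measurable Z)
    (hdens : P.map Z = volume.withDensity fun z => ENNReal.ofReal (typeIVDensity n α β z)) :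
    P.map (fun ω =>
        (1 - Real.exp (-(n : ℝ) * Z ω)) / (1 + ((n : ℝ) - 1) * Real.exp (-(n : ℝ) * Z ω))) =
      volume.withDensity fun x => ENNReal.ofReal (rescaledBetaDensity n α β x) := by
  have hc := hc_pos hn
  have hcont : Continuous (gmap n) := by
    apply Continuous.div (by continuity) (by continuity)
    intro z
    have := Real.exp_pos (-(n:ℝ) * z)
    nlinarith
  have hg : Measurable (gmap n) := hcont.measurable
  have hfun : (fun ω =>
      (1 - Real.exp (-(n : ℝ) * Z ω)) / (1 + ((n : ℝ) - 1) * Real.exp (-(n : ℝ) * Z ω)))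
      = gmap n ∘ Z := rfl
  rw [hfun, ← Measure.map_map hg hZ, hdens]
  refine Measure.ext fun s hs => ?_
  rw [Measure.map_apply hg hs, withDensity_apply _ (hg hs), withDensity_apply _ hs,
    gmap_preimage hn s]
  have hsI : MeasurableSet (s ∩ Ioo (-(1 / ((n : ℝ) - 1))) 1) := hs.inter measurableSet_Ioo
  have hder : ∀ x ∈ s ∩ Ioo (-(1 / ((n : ℝ) - 1))) 1,
      HasFDerivWithinAt (hmap n)
        ((1 : ℝ →L[ℝ] ℝ).smulRight (1 / ((1 + ((n:ℝ) - 1) * x) * (1 - x))))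
        (s ∩ Ioo (-(1 / ((n : ℝ) - 1))) 1) x :=
    fun x hx => ((hmap_hasDerivAt hn hx.2).hasDerivWithinAt).hasFDerivWithinAt
  have hinj : Set.InjOn (hmap n) (s ∩ Ioo (-(1 / ((n : ℝ) - 1))) 1) :=
    fun a ha b hb hab => by rw [← gmap_hmap hn ha.2, ← gmap_hmap hn hb.2, hab]
  rw [lintegral_image_eq_lintegral_abs_det_fderiv_mul volume hsI hder hinj]
  simp only [ContinuousLinearMap.det_smulRight, ContinuousLinearMap.one_apply, one_mul]
  rw [setLIntegral_congr_fun hsI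
    (fun x hx => density_transform hn hx.2)]
  have hind : ∀ x, ENNReal.ofReal (rescaledBetaDensity n α β x)
      = (Ioo (-(1 / ((n : ℝ) - 1))) 1).indicator
          (fun x => ENNReal.ofReal (rescaledBetaDensity n α β x)) x := by
    intro x
    by_cases hx : x ∈ Ioo (-(1 / ((n : ℝ) - 1))) 1
    · rw [Set.indicator_of_mem hx]
    · rw [Set.indicator_of_notMem hx, rescaledBetaDensity, if_neg hx, ENNReal.ofReal_zero]
  have hrhs := lintegral_congr (μ := volume.restrict s) hind
  rw [setLIntegral_indicator measurableSet_Ioo, Set.inter_comm] at hrhs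
  exact hrhs.symm
end

section
/- Let Z have the logistic distribution with density f_z(z) = e^{−(z−μ)/s} / (s(1 + e^{−(z−μ)/s})²) where μ = log(n−1)/n and s = 1/n. Then R = (1 − e^{−nZ})/(1 + (n−1)e^{−nZ}) is uniformly distributed on (−1/(n−1), 1). -/
open MeasureTheory

/-- The logistic density with location `μ = log(n−1)/n` and scale `s = 1/n`. -/
noncomputable def logisticDensity (n : ℕ) (z : ℝ) : ℝ :=
  Real.exp (-(z - Real.log ((n : ℝ) - 1) / n) / (1 / (n : ℝ))) /
    ((1 / (n : ℝ)) *
      (1 + Real.exp (-(z - Real.log ((n : ℝ) - 1) / n) / (1 / (n : ℝ)))) ^ 2)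

section Aux

open Set Filter Real

private lemma aux_deriv (n c : ℝ) (hc : 0 < c) (z : ℝ) :
    HasDerivAt (fun z => (1 + c * Real.exp (-n * z))⁻¹)
      (n * c * Real.exp (-n * z) / (1 + c * Real.exp (-n * z)) ^ 2) z := by
  have h1 : HasDerivAt (fun z : ℝ => -n * z) (-n) z := by
    simpa using (hasDerivAt_id z).const_mul (-n)
  have h2 := h1.exp
  have h3 : HasDerivAt (fun z : ℝ => 1 + c * Real.exp (-n * z))
      (c * (Real.exp (-n * z) * -n)) z := (h2.const_mul c).const_add 1
  have hpos : 0 < 1 + c * Real.exp (-n * z) := by positivity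
  have := h3.inv hpos.ne'
  exact this.congr_deriv (by ring)

private lemma aux_pos (c z : ℝ) (hc : 0 < c) : (0:ℝ) < 1 + c * Real.exp z := by positivity

private lemma aux_integrable (n c a : ℝ) (hn : 0 < n) (hc : 0 < c) :
    IntegrableOn (fun z => n * c * Real.exp (-n * z) / (1 + c * Real.exp (-n * z)) ^ 2)
      (Iic a) := by
  have hexp : IntegrableOn (fun z : ℝ => Real.exp (n * z)) (Iic a) := by
    have h0 : IntegrableOn (fun x : ℝ => Real.exp (-n * x)) (Ioi (-(a+1))) :=
      exp_neg_integrableOn_Ioi _ hn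
    have h1 : IntegrableOn ((fun x : ℝ => Real.exp (-n * x)) ∘ Neg.neg)
        (Neg.neg ⁻¹' (Ioi (-(a+1)))) :=
      ((MeasurePreserving.integrableOn_comp_preimage (Measure.measurePreserving_neg _)
        (Homeomorph.neg ℝ).measurableEmbedding).2 h0)
    have h2 : (Neg.neg ⁻¹' (Ioi (-(a+1))) : Set ℝ) = Iio (a+1) := by
      ext x; simp [lt_neg]
    rw [h2] at h1
    have h3 : IntegrableOn ((fun x : ℝ => Real.exp (-n * x)) ∘ Neg.neg) (Iic a) :=
      h1.mono_set (fun x hx => by simp only [Set.mem_Iio, Set.mem_Iic] at *; linarith)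
    have h4 : ((fun x : ℝ => Real.exp (-n * x)) ∘ Neg.neg) = fun z : ℝ => Real.exp (n * z) := by
      funext x
      show Real.exp (-n * -x) = Real.exp (n * x)
      rw [show -n * -x = n * x by ring]
    rwa [h4] at h3
  apply Integrable.mono' (hexp.const_mul (n / c))
  · apply Continuous.aestronglyMeasurable
    fun_prop (disch := intro z; positivity)
  · filter_upwards with z
    have he : 0 < Real.exp (-n * z) := Real.exp_pos _
    have hpos : 0 < 1 + c * Real.exp (-n * z) := by positivity
    rw [Real.norm_of_nonneg (by positivity)]
    rw [div_le_iff₀ (by positivity)]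
    set E := Real.exp (-n * z) with hE
    set X := Real.exp (n * z) with hX
    have key : (c * E) ^ 2 ≤ (1 + c * E) ^ 2 := by nlinarith
    have hrw : X * E = 1 := by
      rw [hE, hX, ← Real.exp_add]; simp
    have h4 : n / c * X * (c * E) ^ 2 = n * c * E := by
      field_simp
      linear_combination hrw
    have h5 : n / c * X * (c * E) ^ 2 ≤ n / c * X * (1 + c * E) ^ 2 :=
      mul_le_mul_of_nonneg_left key (by positivity)
    have h6 : n / c * X * (1 + c * E) ^ 2 = n / c * X * (1 + c * E) ^ 2 := rfl
    calc n * c * E = n / c * X * (c * E) ^ 2 := h4.symm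
      _ ≤ n / c * X * (1 + c * E) ^ 2 := h5
      _ = n / c * X * (1 + c * E) ^ 2 := rfl

private lemma aux_tendsto (n c : ℝ) (hn : 0 < n) (hc : 0 < c) :
    Tendsto (fun z => (1 + c * Real.exp (-n * z))⁻¹) atBot (nhds 0) := by
  apply Tendsto.inv_tendsto_atTop
  apply tendsto_atTop_add_const_left
  apply Tendsto.const_mul_atTop hc
  apply Real.tendsto_exp_atTop.comp
  exact (tendsto_neg_atBot_atTop.const_mul_atTop hn).congr (fun z => by ring)

private lemma aux_integral (n c a : ℝ) (hn : 0 < n) (hc : 0 < c) :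
    ∫ z in Iic a, n * c * Real.exp (-n * z) / (1 + c * Real.exp (-n * z)) ^ 2
      = (1 + c * Real.exp (-n * a))⁻¹ := by
  have := integral_Iic_of_hasDerivAt_of_tendsto' (a := a)
    (fun x _ => aux_deriv n c hc x) (aux_integrable n c a hn hc) (aux_tendsto n c hn hc)
  simpa using this

private lemma aux_lintegral (n c a : ℝ) (hn : 0 < n) (hc : 0 < c) :
    ∫⁻ z in Iic a, ENNReal.ofReal (n * c * Real.exp (-n * z) / (1 + c * Real.exp (-n * z)) ^ 2)
      = ENNReal.ofReal ((1 + c * Real.exp (-n * a))⁻¹) := by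
  rw [← ofReal_integral_eq_lintegral_ofReal (aux_integrable n c a hn hc)
    (Filter.Eventually.of_forall fun z => by positivity), aux_integral n c a hn hc]

end Aux

open Set Filter Real in
/-- If `Z` has the logistic density with `μ = log(n−1)/n` and
`s = 1/n`, then `R = (1 − e^{−nZ})/(1 + (n−1)e^{−nZ})` is uniformly distributed
on `(−1/(n−1), 1)` (constant density `(n−1)/n` on that interval). -/
theorem logistic_to_uniform (n : ℕ) (hn : 2 ≤ n)
    {Ω : Type*} [MeasurableSpace Ω] (P : Measure Ω) [IsProbabilityMeasure P]
    (Z : Ω → ℝ) (hZ : Measurable Z)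
    (hdens : P.map Z = volume.withDensity fun z => ENNReal.ofReal (logisticDensity n z)) :
    P.map (fun ω =>
        (1 - Real.exp (-(n : ℝ) * Z ω)) / (1 + ((n : ℝ) - 1) * Real.exp (-(n : ℝ) * Z ω))) =
      volume.withDensity fun x =>
        Set.indicator (Set.Ioo (-(1 / ((n : ℝ) - 1))) 1)
          (fun _ => ENNReal.ofReal (((n : ℝ) - 1) / n)) x := by
  simp only [logisticDensity] at hdens
  have hn2 : (2:ℝ) ≤ (n:ℝ) := by exact_mod_cast hn
  set c : ℝ := (n:ℝ) - 1 with hcdef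
  have hc : 0 < c := by rw [hcdef]; linarith
  have hnpos : (0:ℝ) < (n:ℝ) := by linarith
  have hnc : (n:ℝ) = c + 1 := by rw [hcdef]; ring
  clear_value c
  have hcn1 : (0:ℝ) < c + 1 := by linarith
  -- rewrite the density
  have hld : ∀ z : ℝ, Real.exp (-(z - Real.log c / n) / (1 / (n:ℝ))) /
      ((1 / (n:ℝ)) * (1 + Real.exp (-(z - Real.log c / n) / (1 / (n:ℝ)))) ^ 2)
      = (n:ℝ) * c * Real.exp (-(n:ℝ) * z) / (1 + c * Real.exp (-(n:ℝ) * z)) ^ 2 := by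
    intro z
    have h1 : -(z - Real.log c / n) / (1 / (n:ℝ)) = Real.log c + -(n:ℝ) * z := by
      field_simp; ring
    have h2 : Real.exp (Real.log c + -(n:ℝ) * z) = c * Real.exp (-(n:ℝ) * z) := by
      rw [Real.exp_add, Real.exp_log hc]
    rw [h1, h2]
    rw [div_eq_div_iff (by positivity) (by positivity)]
    field_simp
  have hdens' : P.map Z = volume.withDensity
      (fun z => ENNReal.ofReal ((n:ℝ) * c * Real.exp (-(n:ℝ) * z) /
        (1 + c * Real.exp (-(n:ℝ) * z)) ^ 2)) := by
    rw [hdens]; congr 1; funext z; rw [hld z]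
  set g0 : ℝ → ℝ := fun z =>
    (1 - Real.exp (-(n:ℝ) * z)) / (1 + c * Real.exp (-(n:ℝ) * z)) with hg0def
  have hg0 : Measurable g0 := by
    rw [hg0def]; fun_prop
  have hGm : Measurable (fun ω =>
      (1 - Real.exp (-(n:ℝ) * Z ω)) / (1 + c * Real.exp (-(n:ℝ) * Z ω))) := hg0.comp hZ
  have hpre : ∀ r : ℝ, (fun ω =>
      (1 - Real.exp (-(n:ℝ) * Z ω)) / (1 + c * Real.exp (-(n:ℝ) * Z ω))) ⁻¹' (Iic r)
      = Z ⁻¹' (g0 ⁻¹' Iic r) := fun r => rfl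
  have hlow : ∀ z : ℝ, -(1/c) < g0 z := by
    intro z
    have he : 0 < Real.exp (-(n:ℝ) * z) := Real.exp_pos _
    have hd : 0 < 1 + c * Real.exp (-(n:ℝ) * z) := by positivity
    rw [hg0def, lt_div_iff₀ hd]
    have hexp : -(1/c) * (1 + c * Real.exp (-(n:ℝ) * z))
        = -(1/c) - Real.exp (-(n:ℝ) * z) := by field_simp; ring
    have hinv : 0 < 1/c := by positivity
    rw [hexp]; linarith
  have hup : ∀ z : ℝ, g0 z < 1 := by
    intro z
    have he : 0 < Real.exp (-(n:ℝ) * z) := Real.exp_pos _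
    have hd : 0 < 1 + c * Real.exp (-(n:ℝ) * z) := by positivity
    rw [hg0def, div_lt_one hd]
    nlinarith
  haveI : IsProbabilityMeasure (P.map (fun ω =>
      (1 - Real.exp (-(n:ℝ) * Z ω)) / (1 + c * Real.exp (-(n:ℝ) * Z ω)))) :=
    Measure.isProbabilityMeasure_map hGm.aemeasurable
  have hRHS : ∀ r : ℝ, (volume.withDensity fun x =>
      Set.indicator (Ioo (-(1/c)) 1) (fun _ => ENNReal.ofReal (c / n)) x) (Iic r)
      = ENNReal.ofReal (c / n) * volume (Ioo (-(1/c)) 1 ∩ Iic r) := by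
    intro r
    rw [withDensity_apply _ measurableSet_Iic, lintegral_indicator measurableSet_Ioo,
      setLIntegral_const, Measure.restrict_apply measurableSet_Ioo]
  have hLHS : ∀ r : ℝ, (P.map (fun ω =>
      (1 - Real.exp (-(n:ℝ) * Z ω)) / (1 + c * Real.exp (-(n:ℝ) * Z ω)))) (Iic r)
      = ∫⁻ z in g0 ⁻¹' Iic r, ENNReal.ofReal ((n:ℝ) * c * Real.exp (-(n:ℝ) * z) /
        (1 + c * Real.exp (-(n:ℝ) * z)) ^ 2) := by
    intro r
    rw [Measure.map_apply hGm measurableSet_Iic, hpre,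
      ← Measure.map_apply hZ (hg0 measurableSet_Iic), hdens',
      withDensity_apply _ (hg0 measurableSet_Iic)]
  refine Measure.ext_of_Iic _ _ (fun r => ?_)
  rcases le_or_gt r (-(1/c)) with hr | hrl
  · -- r below the support
    have hempty : g0 ⁻¹' Iic r = ∅ := by
      apply Set.eq_empty_iff_forall_notMem.2
      intro z hz
      have := hlow z
      simp only [mem_preimage, mem_Iic] at hz
      linarith
    have hempty2 : Ioo (-(1/c)) 1 ∩ Iic r = ∅ := by
      apply Set.eq_empty_iff_forall_notMem.2
      rintro x ⟨⟨h1, h2⟩, h3⟩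
      simp only [mem_Iic] at h3
      linarith
    rw [hLHS, hRHS, hempty, hempty2]
    simp
  rcases lt_or_ge r 1 with hru | hru
  · -- main case
    have h1rc : 0 < 1 + r * c := by
      have h := mul_lt_mul_of_pos_right hrl hc
      have : -(1/c) * c = -1 := by field_simp
      nlinarith
    set tr : ℝ := (1 - r) / (1 + r * c) with htrdef
    have htr : 0 < tr := div_pos (by linarith) h1rc
    set zr : ℝ := -(Real.log tr) / n with hzrdef
    have hnzr : -(n:ℝ) * zr = Real.log tr := by rw [hzrdef]; field_simp
    have hexp_zr : Real.exp (-(n:ℝ) * zr) = tr := by rw [hnzr, Real.exp_log htr]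
    have hset : g0 ⁻¹' Iic r = Iic zr := by
      ext z
      simp only [mem_preimage, mem_Iic, hg0def]
      have htpos : 0 < Real.exp (-(n:ℝ) * z) := Real.exp_pos _
      have hd : 0 < 1 + c * Real.exp (-(n:ℝ) * z) := by positivity
      rw [div_le_iff₀ hd]
      have hiff1 : 1 - Real.exp (-(n:ℝ) * z) ≤ r * (1 + c * Real.exp (-(n:ℝ) * z))
          ↔ tr ≤ Real.exp (-(n:ℝ) * z) := by
        rw [htrdef, div_le_iff₀ h1rc]
        constructor <;> intro h <;> nlinarith
      rw [hiff1, ← Real.exp_log htr, Real.exp_le_exp, hzrdef, le_div_iff₀ hnpos]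
      constructor <;> intro h <;> linarith
    rw [hLHS, hRHS, hset, aux_lintegral (n:ℝ) c zr hnpos hc, hexp_zr]
    have hinter : Ioo (-(1/c)) 1 ∩ Iic r = Ioc (-(1/c)) r := by
      ext x
      simp only [mem_inter_iff, mem_Ioo, mem_Iic, mem_Ioc]
      constructor
      · rintro ⟨⟨h1, h2⟩, h3⟩; exact ⟨h1, h3⟩
      · rintro ⟨h1, h3⟩; exact ⟨⟨h1, lt_of_le_of_lt h3 hru⟩, h3⟩
    rw [hinter, Real.volume_Ioc, ← ENNReal.ofReal_mul (by positivity)]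
    congr 1
    have e1 : 1 + c * tr = (c + 1) / (1 + r * c) := by
      rw [htrdef, mul_div_assoc', one_add_div h1rc.ne']; congr 1; ring
    rw [e1, inv_div, hnc]
    field_simp
    ring
  · -- r above the support
    have huniv : g0 ⁻¹' Iic r = univ :=
      Set.eq_univ_of_forall (fun z => by
        simp only [mem_preimage, mem_Iic]; exact (hup z).le.trans hru)
    rw [Measure.map_apply hGm measurableSet_Iic, hpre, huniv, Set.preimage_univ,
      measure_univ, hRHS]
    have hinter : Ioo (-(1/c)) 1 ∩ Iic r = Ioo (-(1/c)) 1 :=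
      Set.inter_eq_left.2 (fun x hx => le_trans hx.2.le hru)
    rw [hinter, Real.volume_Ioo, ← ENNReal.ofReal_mul (by positivity)]
    rw [show c / n * (1 - -(1/c)) = 1 by rw [hnc]; field_simp; ring]
    exact ENNReal.ofReal_one.symm
end
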